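/- arXiv:2210.04334 — 2 statements merged into one kernel-verified Lean document; each statement's English description precedes it below -/
import Mathlib

section
/- Theorem 2 (FDR control of multi-step QuTE, independent p-values): for every graph G, every integer c ≥ 0 and every level α ∈ (0,1), if the N p-values are mutually independent and every null p-value is superuniform, then the c-step QuTE procedure at level α satisfies FDR ≤ α·|H^0|/N. -/
/-!
QuTE rejects hypothesis `i = (a, j)` iff `P i ≤ α K_i / N`, where `K_i` (`quteCount`) is the
largest BH count among the nodes within distance `c` of `a`. Let `F_i` be `K_i` computed with
`P i` replaced by `0`: it is a function of the other p-values, hence independent of `P i`.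
Self-consistency of BH gives `F_i = K_i` whenever `i` is rejected, and `R ≥ K_i` because every
hypothesis counted by some node's BH test is rejected by QuTE. Hence
`V / max R 1 ≤ ∑_{i ∈ H⁰} 𝟙{P i ≤ α F_i / N} / max F_i 1`, and integrating first over `P i`
(superuniform) and then over `F_i` bounds each term by `α / N`.
-/

open MeasureTheory ProbabilityTheory Finset

open Classical in
/-- The Benjamini–Hochberg count `k̂_α(P)`: the largest `k ∈ {0,…,N}` such that
at least `k` of the p-values are `≤ α k / N`, where `N` is the number of hypotheses. -/
noncomputable def bhCount {I : Type*} [Fintype I] (α : ℝ) (P : I → ℝ) : ℕ :=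
  Nat.findGreatest
    (fun k => k ≤ (Finset.univ.filter fun i => P i ≤ α * k / (Fintype.card I)).card)
    (Fintype.card I)

open Classical in
/-- The Benjamini–Hochberg rejection set `Rej_α(P) = {i : P i ≤ α k̂_α(P) / N}`. -/
noncomputable def bhRej {I : Type*} [Fintype I] (α : ℝ) (P : I → ℝ) : Finset I :=
  Finset.univ.filter fun i => P i ≤ α * (bhCount α P) / (Fintype.card I)

open Classical in
/-- The p-value vector `P^{b,c}` known to node `b` after `c` rounds of communication:
every p-value hosted at a node of graph distance more than `c` from `b` is replaced by `1`. -/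
noncomputable def quteMasked {V : Type*} (G : SimpleGraph V) (n : V → ℕ)
    (c : ℕ) (P : (Σ a : V, Fin (n a)) → ℝ) (b : V) : (Σ a : V, Fin (n a)) → ℝ :=
  fun i => if G.edist b i.1 ≤ c then P i else 1

open Classical in
/-- The rejection set of the `c`-step QuTE procedure at level `α`: hypothesis `j` at node `a`
is rejected iff some node `b` within graph distance `c` of `a` rejects it in its local BH test
at level `α` on the p-values it knows (unknown p-values set to `1`). -/
noncomputable def quteRej {V : Type*} [Fintype V] (G : SimpleGraph V) (n : V → ℕ)
    (c : ℕ) (α : ℝ) (P : (Σ a : V, Fin (n a)) → ℝ) : Finset (Σ a : V, Fin (n a)) :=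
  Finset.univ.filter fun i => ∃ b : V, G.edist i.1 b ≤ c ∧
    P i ≤ α * (bhCount α (quteMasked G n c P b)) / (Fintype.card (Σ a : V, Fin (n a)))

section BH

variable {I : Type*} [Fintype I] {α : ℝ} {Q : I → ℝ}

lemma bhCount_le_card (α : ℝ) (Q : I → ℝ) : bhCount α Q ≤ Fintype.card I :=
  Nat.findGreatest_le _

open Classical in
lemma bhCount_le_card_filter (α : ℝ) (Q : I → ℝ) :
    bhCount α Q ≤ #{i | Q i ≤ α * bhCount α Q / Fintype.card I} :=
  Nat.findGreatest_spec
    (P := fun k => k ≤ #{i | Q i ≤ α * k / Fintype.card I}) (m := 0)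
    (Nat.zero_le _) (Nat.zero_le _)

open Classical in
lemma le_bhCount {m : ℕ} (hm : m ≤ Fintype.card I)
    (h : m ≤ #{i | Q i ≤ α * m / Fintype.card I}) : m ≤ bhCount α Q :=
  Nat.le_findGreatest hm h

lemma bhCount_antitone : Antitone (bhCount (I := I) α) := by
  classical
  intro Q Q' h
  refine le_bhCount (bhCount_le_card α Q') ((bhCount_le_card_filter α Q').trans (card_le_card ?_))
  intro i
  simp only [mem_filter, mem_univ, true_and]
  exact (h i).trans

lemma bhCount_update_le [DecidableEq I] {i : I} {t : ℝ}
    (hi : Q i ≤ α * bhCount α (Function.update Q i t) / Fintype.card I) :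
    bhCount α (Function.update Q i t) ≤ bhCount α Q := by
  classical
  refine le_bhCount (bhCount_le_card _ _) ((bhCount_le_card_filter _ _).trans (card_le_card ?_))
  intro j
  simp only [mem_filter, mem_univ, true_and]
  rcases eq_or_ne j i with rfl | hj
  · exact fun _ => hi
  · simp [Function.update_of_ne hj]

open Classical in
lemma measurable_bhCount {I : Type*} [Fintype I] (α : ℝ) : Measurable (bhCount (I := I) α) := by
  refine measurable_findGreatest fun k _ => ?_
  have hcard : Measurable fun Q : I → ℝ => #{i | Q i ≤ α * k / Fintype.card I} := by
    simp_rw [card_filter]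
    exact Finset.measurable_sum _ fun i _ =>
      Measurable.ite (measurableSet_le (measurable_pi_apply i) measurable_const)
        measurable_const measurable_const
  exact hcard measurableSet_Ici

end BH

noncomputable def thresholdWeight (β x : ℝ) (k : ℕ) : ℝ :=
  (if x ≤ β * k then 1 else 0) / (max k 1 : ℕ)

section ThresholdWeight

variable {Ω : Type*} [MeasurableSpace Ω] {μ : Measure Ω} {β : ℝ}

lemma thresholdWeight_nonneg (β x : ℝ) (k : ℕ) : 0 ≤ thresholdWeight β x k := by
  unfold thresholdWeight
  positivity

lemma thresholdWeight_le_one (β x : ℝ) (k : ℕ) : thresholdWeight β x k ≤ 1 := by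
  refine div_le_one_of_le₀ ?_ (Nat.cast_nonneg _)
  have : (1 : ℝ) ≤ (max k 1 : ℕ) := by exact_mod_cast le_max_right k 1
  split_ifs <;> linarith

lemma measurable_thresholdWeight (β : ℝ) :
    Measurable fun p : ℝ × ℕ => thresholdWeight β p.1 p.2 := by
  have hk : Measurable fun p : ℝ × ℕ => (p.2 : ℝ) := measurable_from_top.comp measurable_snd
  refine Measurable.div ?_ (measurable_from_top.comp (measurable_snd.max measurable_const))
  exact Measurable.ite (measurableSet_le measurable_fst (hk.const_mul β))
    measurable_const measurable_const

lemma integrable_thresholdWeight [IsFiniteMeasure μ] {X : Ω → ℝ} {F : Ω → ℕ}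
    (hX : Measurable X) (hF : Measurable F) :
    Integrable (fun ω => thresholdWeight β (X ω) (F ω)) μ :=
  .of_bound ((measurable_thresholdWeight β).comp (hX.prodMk hF)).aestronglyMeasurable 1 <|
    ae_of_all _ fun ω => by
      rw [Real.norm_of_nonneg (thresholdWeight_nonneg ..)]
      exact thresholdWeight_le_one ..

lemma measureReal_Iic_le_of_superuniform {ν : Measure ℝ} [IsProbabilityMeasure ν]
    (hν : ∀ u ∈ Set.Icc (0 : ℝ) 1, ν (Set.Iic u) ≤ ENNReal.ofReal u) {u : ℝ} (hu : 0 ≤ u) :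
    ν.real (Set.Iic u) ≤ u := by
  rcases le_or_gt u 1 with hu1 | hu1
  · simpa [measureReal_def, ENNReal.toReal_ofReal hu] using
      ENNReal.toReal_mono ENNReal.ofReal_ne_top (hν u ⟨hu, hu1⟩)
  · exact measureReal_le_one.trans hu1.le

lemma integral_thresholdWeight_le {ν : Measure ℝ} [IsProbabilityMeasure ν]
    (hν : ∀ u ∈ Set.Icc (0 : ℝ) 1, ν (Set.Iic u) ≤ ENNReal.ofReal u) (hβ : 0 ≤ β) (k : ℕ) :
    ∫ x, thresholdWeight β x k ∂ν ≤ β := by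
  have hind : (fun x => thresholdWeight β x k) =
      (Set.Iic (β * k)).indicator fun _ => 1 / ((max k 1 : ℕ) : ℝ) := by
    funext x
    by_cases hx : x ≤ β * k <;> simp [thresholdWeight, hx]
  have hk : (k : ℝ) / (max k 1 : ℕ) ≤ 1 :=
    div_le_one_of_le₀ (by exact_mod_cast le_max_left k 1) (Nat.cast_nonneg _)
  rw [hind, integral_indicator_const _ measurableSet_Iic, smul_eq_mul]
  calc ν.real (Set.Iic (β * k)) * (1 / (max k 1 : ℕ))
      ≤ β * k * (1 / (max k 1 : ℕ)) := by
        gcongr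
        exact measureReal_Iic_le_of_superuniform hν (by positivity)
    _ = β * (k / (max k 1 : ℕ)) := by ring
    _ ≤ β := mul_le_of_le_one_right hβ hk

lemma integral_thresholdWeight_le_of_indepFun [IsProbabilityMeasure μ] {X : Ω → ℝ} {F : Ω → ℕ}
    (hX : Measurable X) (hF : Measurable F) (hXF : IndepFun X F μ)
    (hsuper : ∀ u ∈ Set.Icc (0 : ℝ) 1, μ {ω | X ω ≤ u} ≤ ENNReal.ofReal u) (hβ : 0 ≤ β) :
    ∫ ω, thresholdWeight β (X ω) (F ω) ∂μ ≤ β := by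
  have hlaw : μ.map (fun ω => (X ω, F ω)) = (μ.map X).prod (μ.map F) :=
    hXF.map_prod_eq_prod_map_map hX.aemeasurable hF.aemeasurable
  have : IsProbabilityMeasure (μ.map X) := Measure.isProbabilityMeasure_map hX.aemeasurable
  have : IsProbabilityMeasure (μ.map F) := Measure.isProbabilityMeasure_map hF.aemeasurable
  have hXlaw : ∀ u ∈ Set.Icc (0 : ℝ) 1, μ.map X (Set.Iic u) ≤ ENNReal.ofReal u := fun u hu => by
    rw [Measure.map_apply hX measurableSet_Iic]
    exact hsuper u hu
  calc ∫ ω, thresholdWeight β (X ω) (F ω) ∂μ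
      = ∫ p, thresholdWeight β p.1 p.2 ∂(μ.map X).prod (μ.map F) := by
        rw [← hlaw, integral_map (hX.prodMk hF).aemeasurable
          (measurable_thresholdWeight β).aestronglyMeasurable]
    _ = ∫ k, ∫ x, thresholdWeight β x k ∂μ.map X ∂μ.map F :=
        integral_prod_symm _ (integrable_thresholdWeight measurable_fst measurable_snd)
    _ ≤ ∫ _, β ∂μ.map F :=
        integral_mono_of_nonneg
          (ae_of_all _ fun _ => integral_nonneg fun _ => thresholdWeight_nonneg ..)
          (integrable_const β) (ae_of_all _ fun k => integral_thresholdWeight_le hXlaw hβ k)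
    _ = β := by simp

end ThresholdWeight

lemma ProbabilityTheory.iIndepFun.indepFun_comp_update {Ω ι β γ : Type*} [MeasurableSpace Ω]
    {μ : Measure Ω} [Fintype ι] [DecidableEq ι] [MeasurableSpace β] [MeasurableSpace γ]
    {f : ι → Ω → β}
    (hf : iIndepFun f μ) (hmeas : ∀ i, Measurable (f i)) (i : ι) (b : β)
    {h : (ι → β) → γ} (hh : Measurable h) :
    IndepFun (f i) (fun ω => h (Function.update (fun j => f j ω) i b)) μ := by
  have hsplit := (hf.indepFun_finset {i} (univ.erase i) (by simp) hmeas).comp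
    (_mγ := ‹MeasurableSpace β›) (φ := fun y => y ⟨i, mem_singleton_self i⟩)
    (ψ := fun y => h (Function.updateFinset (fun _ => b) (univ.erase i) y))
    (measurable_pi_apply _) (hh.comp measurable_updateFinset)
  convert hsplit using 2 with ω
  · rfl
  refine congrArg h (funext fun j => ?_)
  rcases eq_or_ne j i with rfl | hj
  · simp [Function.updateFinset]
  · simp [Function.updateFinset, hj]

open Classical in
noncomputable def quteCount {V : Type*} [Fintype V] (G : SimpleGraph V) (n : V → ℕ) (c : ℕ)
    (α : ℝ) (x : (Σ a : V, Fin (n a)) → ℝ) (a : V) : ℕ :=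
  (univ.filter fun b => G.edist a b ≤ c).sup fun b => bhCount α (quteMasked G n c x b)

section QuTE

variable {V : Type*} [Fintype V] [DecidableEq V] {G : SimpleGraph V} {n : V → ℕ} {c : ℕ}
  {α : ℝ} {x : (Σ a : V, Fin (n a)) → ℝ}

omit [Fintype V] [DecidableEq V] in
lemma quteMasked_mono (b : V) : Monotone fun x => quteMasked G n c x b := by
  intro x y h i
  simp only [quteMasked]
  split_ifs
  exacts [h i, le_rfl]

omit [Fintype V] in
lemma quteMasked_update {i : Σ a : V, Fin (n a)} {b : V} (hb : G.edist b i.1 ≤ c) (t : ℝ) :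
    quteMasked G n c (Function.update x i t) b = Function.update (quteMasked G n c x b) i t := by
  funext j
  rcases eq_or_ne j i with rfl | hj
  · simp [quteMasked, hb]
  · simp [quteMasked, Function.update_of_ne hj]

omit [DecidableEq V] in
lemma bhCount_le_quteCount {a b : V} (hab : G.edist a b ≤ c) :
    bhCount α (quteMasked G n c x b) ≤ quteCount G n c α x a :=
  le_sup (f := fun b => bhCount α (quteMasked G n c x b)) (by simpa using hab)

omit [DecidableEq V] in
lemma exists_bhCount_eq_quteCount (a : V) :
    ∃ b, G.edist a b ≤ c ∧ bhCount α (quteMasked G n c x b) = quteCount G n c α x a := by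
  obtain ⟨b, hb, h⟩ := exists_mem_eq_sup (univ.filter fun b => G.edist a b ≤ c)
    ⟨a, by simp⟩ fun b => bhCount α (quteMasked G n c x b)
  exact ⟨b, by simpa using hb, h.symm⟩

omit [DecidableEq V] in
lemma quteCount_antitone (a : V) : Antitone fun x => quteCount G n c α x a :=
  fun _ _ h => sup_mono_fun fun b _ => bhCount_antitone (quteMasked_mono b h)

omit [DecidableEq V] in
lemma mem_quteRej_iff (hα : 0 ≤ α) {i : Σ a : V, Fin (n a)} :
    i ∈ quteRej G n c α x ↔
      x i ≤ α * quteCount G n c α x i.1 / Fintype.card (Σ a : V, Fin (n a)) := by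
  simp only [quteRej, mem_filter, mem_univ, true_and]
  constructor
  · rintro ⟨b, hb, hi⟩
    exact hi.trans (by gcongr; exact bhCount_le_quteCount hb)
  · intro hi
    obtain ⟨b, hb, hbmax⟩ :=
      exists_bhCount_eq_quteCount (G := G) (c := c) (α := α) (x := x) i.1
    exact ⟨b, hb, hbmax ▸ hi⟩

lemma quteCount_update_le {i : Σ a : V, Fin (n a)} {t : ℝ}
    (hi : x i ≤ α * quteCount G n c α (Function.update x i t) i.1 /
      Fintype.card (Σ a : V, Fin (n a))) :
    quteCount G n c α (Function.update x i t) i.1 ≤ quteCount G n c α x i.1 := by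
  obtain ⟨b, hb, hbmax⟩ :=
    exists_bhCount_eq_quteCount (G := G) (c := c) (α := α) (x := Function.update x i t) i.1
  have hmask := quteMasked_update (x := x) (by rwa [SimpleGraph.edist_comm]) t
  have hxi : quteMasked G n c x b i = x i := by
    simp [quteMasked, SimpleGraph.edist_comm (u := b), hb]
  rw [← hbmax, hmask] at hi ⊢
  exact (bhCount_update_le (hxi ▸ hi)).trans (bhCount_le_quteCount hb)

lemma quteCount_update_zero_of_mem (hα : 0 ≤ α) {i : Σ a : V, Fin (n a)} (hx : 0 ≤ x i)
    (hi : i ∈ quteRej G n c α x) :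
    quteCount G n c α (Function.update x i 0) i.1 = quteCount G n c α x i.1 := by
  have hle : quteCount G n c α x i.1 ≤ quteCount G n c α (Function.update x i 0) i.1 :=
    quteCount_antitone i.1 (update_le_self_iff.2 hx)
  refine le_antisymm (quteCount_update_le ?_) hle
  exact ((mem_quteRej_iff hα).1 hi).trans (by gcongr)

omit [DecidableEq V] in
lemma bhCount_quteMasked_le_card_quteRej (hα₀ : 0 ≤ α) (hα₁ : α < 1) (b : V) :
    bhCount α (quteMasked G n c x b) ≤ #(quteRej G n c α x) := by
  set N := Fintype.card (Σ a : V, Fin (n a))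
  set k := bhCount α (quteMasked G n c x b)
  -- masked p-values equal `1`, so they never pass a threshold below `1`
  have hthr : α * k / N < 1 := by
    have hkN : (k : ℝ) ≤ N := by exact_mod_cast bhCount_le_card _ _
    rcases (Nat.cast_nonneg (α := ℝ) N).eq_or_lt with hN | hN
    · simp [← hN]
    · calc α * k / N ≤ α * N / N := by gcongr
        _ = α := by field_simp
        _ < 1 := hα₁
  refine (bhCount_le_card_filter α _).trans (card_le_card fun j hj => ?_)
  simp only [mem_filter, mem_univ, true_and, quteRej] at hj ⊢
  by_cases hbj : G.edist b j.1 ≤ c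
  · rw [quteMasked, if_pos hbj] at hj
    exact ⟨b, by rwa [SimpleGraph.edist_comm], hj⟩
  · rw [quteMasked, if_neg hbj] at hj
    exact absurd hj hthr.not_ge

omit [DecidableEq V] in
lemma quteCount_le_card_quteRej (hα₀ : 0 ≤ α) (hα₁ : α < 1) (a : V) :
    quteCount G n c α x a ≤ #(quteRej G n c α x) :=
  Finset.sup_le fun b _ => bhCount_quteMasked_le_card_quteRej hα₀ hα₁ b

lemma ite_mem_quteRej_div_le_thresholdWeight (hα₀ : 0 ≤ α) (hα₁ : α < 1)
    {i : Σ a : V, Fin (n a)} (hx : 0 ≤ x i) :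
    (if i ∈ quteRej G n c α x then 1 else 0) / ((max #(quteRej G n c α x) 1 : ℕ) : ℝ) ≤
      thresholdWeight (α / Fintype.card (Σ a : V, Fin (n a))) (x i)
        (quteCount G n c α (Function.update x i 0) i.1) := by
  split_ifs with hi
  · have hcount := quteCount_update_zero_of_mem hα₀ hx hi
    have hthr := (mem_quteRej_iff hα₀).1 hi
    rw [thresholdWeight, hcount, div_mul_eq_mul_div, if_pos hthr]
    gcongr
    exact quteCount_le_card_quteRej hα₀ hα₁ i.1
  · simpa using thresholdWeight_nonneg ..

lemma card_quteRej_inter_div_le_sum (hα₀ : 0 ≤ α) (hα₁ : α < 1) (hx : 0 ≤ x)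
    (H0 : Finset (Σ a : V, Fin (n a))) :
    (#(quteRej G n c α x ∩ H0) : ℝ) / ((max #(quteRej G n c α x) 1 : ℕ) : ℝ) ≤
      ∑ i ∈ H0, thresholdWeight (α / Fintype.card (Σ a : V, Fin (n a))) (x i)
        (quteCount G n c α (Function.update x i 0) i.1) := by
  rw [inter_comm, ← filter_mem_eq_inter, ← sum_boole, sum_div]
  exact sum_le_sum fun i _ => ite_mem_quteRej_div_le_thresholdWeight hα₀ hα₁ (hx i)

end QuTE

lemma measurable_quteMasked {V : Type*} (G : SimpleGraph V) (n : V → ℕ) (c : ℕ) (b : V) :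
    Measurable fun x : (Σ a : V, Fin (n a)) → ℝ => quteMasked G n c x b := by
  refine measurable_pi_lambda _ fun j => ?_
  simp only [quteMasked]
  split_ifs
  exacts [measurable_pi_apply j, measurable_const]

lemma measurable_quteCount {V : Type*} [Fintype V] (G : SimpleGraph V) (n : V → ℕ) (c : ℕ)
    (α : ℝ) (a : V) :
    Measurable fun x : (Σ a : V, Fin (n a)) → ℝ => quteCount G n c α x a := by
  classical
  have hne : (univ.filter fun b => G.edist a b ≤ c).Nonempty := ⟨a, by simp⟩
  convert Finset.measurable_sup' hne
    fun b _ => (measurable_bhCount α).comp (measurable_quteMasked G n c b) using 1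
  funext x
  simp [quteCount, Finset.sup'_apply, Finset.sup'_eq_sup]

theorem qute_multi_step_fdr_control_indep_general
    {V : Type*} [Fintype V] [DecidableEq V] (G : SimpleGraph V)
    (n : V → ℕ)
    {Ω : Type*} [MeasurableSpace Ω] (μ : Measure Ω) [IsProbabilityMeasure μ]
    (P : Ω → (Σ a : V, Fin (n a)) → ℝ)
    (hPmeas : ∀ i, Measurable fun ω => P ω i)
    (hPrange : ∀ ω i, P ω i ∈ Set.Icc (0 : ℝ) 1)
    (hindep : iIndepFun
      (fun i ω => P ω i) μ)
    (H0 : Finset (Σ a : V, Fin (n a)))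
    (hnull : ∀ i ∈ H0, ∀ u ∈ Set.Icc (0 : ℝ) 1,
      μ {ω | P ω i ≤ u} ≤ ENNReal.ofReal u)
    (α : ℝ) (hα : α ∈ Set.Ioo (0 : ℝ) 1) (c : ℕ) :
    ∫ ω, (((quteRej G n c α (P ω) ∩ H0).card : ℝ) /
        (max ((quteRej G n c α (P ω)).card) 1 : ℕ)) ∂μ
      ≤ α * H0.card / Fintype.card (Σ a : V, Fin (n a)) := by
  set N := Fintype.card (Σ a : V, Fin (n a))
  set F : (Σ a : V, Fin (n a)) → Ω → ℕ :=
    fun i ω => quteCount G n c α (Function.update (P ω) i 0) i.1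
  have hF : ∀ i, Measurable (F i) := fun i =>
    (measurable_quteCount G n c α i.1).comp
      (measurable_update_left.comp (measurable_pi_lambda _ hPmeas))
  have hw : ∀ i, Integrable (fun ω => thresholdWeight (α / N) (P ω i) (F i ω)) μ :=
    fun i => integrable_thresholdWeight (hPmeas i) (hF i)
  calc _ ≤ ∫ ω, ∑ i ∈ H0, thresholdWeight (α / N) (P ω i) (F i ω) ∂μ :=
        integral_mono_of_nonneg (ae_of_all _ fun ω => by positivity)
          (integrable_finsetSum _ fun i _ => hw i) (ae_of_all _ fun ω =>
            card_quteRej_inter_div_le_sum hα.1.le hα.2 (fun i => (hPrange ω i).1) H0)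
    _ = ∑ i ∈ H0, ∫ ω, thresholdWeight (α / N) (P ω i) (F i ω) ∂μ :=
        integral_finsetSum _ fun i _ => hw i
    _ ≤ ∑ _i ∈ H0, α / N := sum_le_sum fun i hi =>
        integral_thresholdWeight_le_of_indepFun (hPmeas i) (hF i)
          (hindep.indepFun_comp_update hPmeas i 0 (measurable_quteCount G n c α i.1))
          (hnull i hi) (div_nonneg hα.1.le N.cast_nonneg)
    _ = α * H0.card / N := by rw [sum_const, nsmul_eq_mul]; ring

/-- **Theorem 2 (FDR control of multi-step QuTE, independent p-values).**
For every graph `G` and level `α ∈ (0,1)`, if the `N` p-values are mutually independent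
and every null p-value is superuniform, then the `c`-step QuTE procedure at level `α`
satisfies `FDR ≤ α |H⁰| / N`. -/
theorem qute_multi_step_fdr_control_indep
    {V : Type*} [Fintype V] [DecidableEq V] [Nonempty V] (G : SimpleGraph V)
    (n : V → ℕ) (hn : ∀ a, 1 ≤ n a)
    {Ω : Type*} [MeasurableSpace Ω] (μ : Measure Ω) [IsProbabilityMeasure μ]
    (P : Ω → (Σ a : V, Fin (n a)) → ℝ)
    (hPmeas : ∀ i, Measurable fun ω => P ω i)
    (hPrange : ∀ ω i, P ω i ∈ Set.Icc (0 : ℝ) 1)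
    (hindep : iIndepFun
      (fun i ω => P ω i) μ)
    (H0 : Finset (Σ a : V, Fin (n a)))
    (hnull : ∀ i ∈ H0, ∀ u ∈ Set.Icc (0 : ℝ) 1,
      μ {ω | P ω i ≤ u} ≤ ENNReal.ofReal u)
    (α : ℝ) (hα : α ∈ Set.Ioo (0 : ℝ) 1) (c : ℕ) :
    ∫ ω, (((quteRej G n c α (P ω) ∩ H0).card : ℝ) /
        (max ((quteRej G n c α (P ω)).card) 1 : ℕ)) ∂μ
      ≤ α * H0.card / Fintype.card (Σ a : V, Fin (n a)) :=
  qute_multi_step_fdr_control_indep_general G n μ P hPmeas hPrange hindep H0 hnull α hα c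
end

section
/- QuTE reduces to BH in the presence of a universal vertex: if the graph G contains a vertex u adjacent to every other vertex (for example, G is a star centered at u or a complete graph), then for every level α ∈ (0,1) and every fixed assignment of p-values, the set of hypotheses rejected by the single-step QuTE procedure at level α equals the centralized BH rejection set Rej_α(P) of the full p-value vector at level α. -/
open MeasureTheory ProbabilityTheory Finset

/-- BH count is antitone in the p-values. -/
lemma bhCount_anti {I : Type*} [Fintype I] {α : ℝ} {P Q : I → ℝ}
    (h : ∀ i, P i ≤ Q i) : bhCount α Q ≤ bhCount α P := by
  classical
  unfold bhCount
  refine Nat.findGreatest_mono (fun k hk => ?_) le_rfl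
  refine hk.trans (Finset.card_le_card ?_)
  intro i hi
  simp only [Finset.mem_filter, Finset.mem_univ, true_and] at hi ⊢
  exact (h i).trans hi

/-- **QuTE reduces to BH in the presence of a universal vertex.**
If `G` contains a vertex `u` adjacent to every other vertex (e.g. a star centered at `u`
or a complete graph), then for every level `α ∈ (0,1)` and every fixed assignment of
p-values, single-step QuTE at level `α` rejects exactly the centralized BH rejection set. -/
theorem quteRej_universal_vertex_eq_bhRej
    {V : Type*} [Fintype V] (G : SimpleGraph V)
    (u : V) (hu : ∀ v : V, v ≠ u → G.Adj u v)
    (n : V → ℕ) (hn : ∀ a, 1 ≤ n a)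
    (P : (Σ a : V, Fin (n a)) → ℝ) (hPrange : ∀ i, P i ∈ Set.Icc (0 : ℝ) 1)
    (α : ℝ) (hα : α ∈ Set.Ioo (0 : ℝ) 1) :
    quteRej G n 1 α P = bhRej α P := by
  classical
  have hedist : ∀ v : V, G.edist u v ≤ 1 := by
    intro v
    by_cases hv : v = u
    · subst hv; simp [SimpleGraph.edist_self]
    · exact le_of_eq (SimpleGraph.edist_eq_one_iff_adj.mpr (hu v hv))
  have hmask : quteMasked G n 1 P u = P := by
    funext i
    simp [quteMasked, hedist i.1]
  ext i
  simp only [quteRej, bhRej, Finset.mem_filter, Finset.mem_univ, true_and]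
  constructor
  · rintro ⟨b, _, hle⟩
    refine hle.trans ?_
    have hcount : bhCount α (quteMasked G n 1 P b) ≤ bhCount α P := by
      refine bhCount_anti (fun j => ?_)
      unfold quteMasked
      split
      · exact le_rfl
      · exact (hPrange j).2
    have hN : (0 : ℝ) ≤ (Fintype.card (Σ a : V, Fin (n a)) : ℝ) := Nat.cast_nonneg _
    have hNpos : (0:ℝ) < (Fintype.card (Σ a : V, Fin (n a)) : ℝ) := by
      exact_mod_cast Fintype.card_pos_iff.mpr ⟨i⟩
    gcongr
    exact hα.1.le
  · intro h
    refine ⟨u, ?_, ?_⟩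
    · rw [SimpleGraph.edist_comm]; exact hedist i.1
    · rw [hmask]; exact h
end
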